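/- Any two entire functions on ℂ² that coincide on the Heisenberg fan Σ ⊂ ℝ² ⊂ ℂ² are equal everywhere on ℂ². -/

import Mathlib

/-!
Fix `z`. The slice `w ↦ F (w, z) - G (w, z)` is entire on `ℂ`, so by the identity theorem it
suffices that it vanishes for real `w = ξ > 0`. For such `ξ`, the slice `λ ↦ F (ξ, λ) - G (ξ, λ)`
vanishes at the points `λ = ξ / (2j + n)` of the fan, which accumulate at `0`, hence identically.
-/

/-- Membership in the Heisenberg fan
`Σ = {(|λ|(2j+n), λ) : λ ≠ 0, j ∈ ℕ} ∪ {(ξ,0) : ξ ≥ 0} ⊂ ℝ²`. -/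
def inHeisenbergFan (n : ℕ) (ξ lam : ℝ) : Prop :=
  (lam ≠ 0 ∧ ∃ j : ℕ, ξ = |lam| * (2 * j + n)) ∨ (lam = 0 ∧ 0 ≤ ξ)

open Filter Topology

theorem Differentiable.eq_of_frequently_eq {E : Type*} [NormedAddCommGroup E] [NormedSpace ℂ E]
    [CompleteSpace E] {f g : ℂ → E} (hf : Differentiable ℂ f) (hg : Differentiable ℂ g) {z₀ : ℂ}
    (hfg : ∃ᶠ z in 𝓝[≠] z₀, f z = g z) : f = g :=
  AnalyticOnNhd.eq_of_frequently_eq (fun z _ ↦ hf.analyticAt z) (fun z _ ↦ hg.analyticAt z) hfg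

theorem Complex.tendsto_ofReal_nhdsNE (x : ℝ) : Tendsto ((↑) : ℝ → ℂ) (𝓝[≠] x) (𝓝[≠] x) :=
  continuous_ofReal.continuousWithinAt.tendsto_nhdsWithin fun _ hy ↦ by simpa using hy

theorem inHeisenbergFan_div {n j : ℕ} {ξ : ℝ} (hξ : 0 < ξ) (hj : 0 < 2 * (j : ℝ) + n) :
    inHeisenbergFan n ξ (ξ / (2 * j + n)) := by
  have hpos : 0 < ξ / (2 * j + n) := div_pos hξ hj
  refine Or.inl ⟨hpos.ne', j, ?_⟩
  rw [abs_of_pos hpos, div_mul_cancel₀ _ hj.ne']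

theorem frequently_inHeisenbergFan_nhdsNE_zero (n : ℕ) {ξ : ℝ} (hξ : 0 < ξ) :
    ∃ᶠ lam in 𝓝[≠] 0, inHeisenbergFan n ξ lam := by
  have hden : ∀ᶠ j : ℕ in atTop, 0 < 2 * (j : ℝ) + n :=
    eventually_atTop.2 ⟨1, fun j hj ↦ by
      have : (1 : ℝ) ≤ j := by exact_mod_cast hj
      positivity⟩
  have hlim : Tendsto (fun j : ℕ ↦ ξ / (2 * j + n)) atTop (𝓝[≠] 0) :=
    tendsto_nhdsWithin_iff.2
      ⟨tendsto_const_nhds.div_atTop <| tendsto_atTop_add_const_right _ _ <|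
          tendsto_natCast_atTop_atTop.const_mul_atTop two_pos,
        hden.mono fun j hj ↦ (div_pos hξ hj).ne'⟩
  exact hlim.frequently (hden.mono fun j hj ↦ inHeisenbergFan_div hξ hj).frequently

theorem entire_eq_of_eq_on_fan_general (n : ℕ) (F G : ℂ × ℂ → ℂ)
    (hF : Differentiable ℂ F) (hG : Differentiable ℂ G)
    (hfan : ∀ ξ lam : ℝ, inHeisenbergFan n ξ lam → F ((ξ : ℂ), (lam : ℂ)) = G ((ξ : ℂ), (lam : ℂ))) :
    F = G := by
  have h_row : ∀ ξ : ℝ, 0 < ξ → ∀ z, F (ξ, z) = G (ξ, z) := fun ξ hξ ↦ congrFun <|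
    Differentiable.eq_of_frequently_eq (hF.comp (by fun_prop)) (hG.comp (by fun_prop)) <|
      (Complex.tendsto_ofReal_nhdsNE 0).frequently <|
        (frequently_inHeisenbergFan_nhdsNE_zero n hξ).mono (hfan ξ)
  funext ⟨w, z⟩
  have h_pos : ∃ᶠ ξ : ℝ in 𝓝[≠] 0, F (ξ, z) = G (ξ, z) :=
    (eventually_mem_nhdsWithin.frequently.filter_mono (nhdsGT_le_nhdsNE 0)).mono
      fun ξ hξ ↦ h_row ξ hξ z
  have h_col : (fun w ↦ F (w, z)) = fun w ↦ G (w, z) :=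
    Differentiable.eq_of_frequently_eq (hF.comp (by fun_prop)) (hG.comp (by fun_prop))
      ((Complex.tendsto_ofReal_nhdsNE 0).frequently h_pos)
  exact congrFun h_col w

/-- Any two entire functions on ℂ² that coincide on the Heisenberg fan
`Σ ⊂ ℝ² ⊂ ℂ²` are equal everywhere. -/
theorem entire_eq_of_eq_on_fan (n : ℕ) (hn : 1 ≤ n) (F G : ℂ × ℂ → ℂ)
    (hF : Differentiable ℂ F) (hG : Differentiable ℂ G)
    (hfan : ∀ ξ lam : ℝ, inHeisenbergFan n ξ lam → F ((ξ : ℂ), (lam : ℂ)) = G ((ξ : ℂ), (lam : ℂ))) :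
    F = G :=
  entire_eq_of_eq_on_fan_general n F G hF hG hfan
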